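/- Theorem 1 (optimal bid characterization): Let p be a finitely supported nonnegative random threshold, v ≥ 0 a valuation, m > 0 a budget, δ ∈ [0,1), a ≥ 0, U : ℝ → ℝ nondecreasing, and f(z) = z + δ(U(m) − U(m − z + a)), assumed continuous and strictly increasing with f(z) → ∞ as z → ∞ and f(0) ≤ v. Then b* = min(m, f⁻¹(v)) maximizes b ↦ E_p[(v − f(p))·1_{p < b ∧ b ≤ m}] over all b ∈ ℝ, where f⁻¹(v) is the unique z with f(z) = v. -/
import Mathlib


open Filter

/-- Theorem 1 of the paper: with a finitely supported nonnegative random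
threshold `p`, effective cost `f(z) = z + δ(U(m) − U(m − z + a))` assumed
continuous, strictly increasing and unbounded with `f(0) ≤ v`, the bid
`b* = min(m, f⁻¹(v))` maximizes `b ↦ E_p[(v − f(p))·1_{p < b ≤ m}]`. -/
theorem optimal_bid_characterization
    {ι : Type*} [Fintype ι] (w : ι → ℝ) (hw : ∀ i, 0 ≤ w i)
    (hw1 : ∑ i, w i = 1) (p : ι → ℝ) (hp : ∀ i, 0 ≤ p i)
    (v m δ a : ℝ) (hv : 0 ≤ v) (hm : 0 < m)
    (hδ0 : 0 ≤ δ) (hδ1 : δ < 1) (ha : 0 ≤ a)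
    (U : ℝ → ℝ) (hU : Monotone U)
    (f : ℝ → ℝ) (hfdef : ∀ z, f z = z + δ * (U m - U (m - z + a)))
    (hfmono : StrictMono f) (hfcont : Continuous f)
    (hftop : Tendsto f atTop atTop) (hf0 : f 0 ≤ v) :
    ∃ z : ℝ, f z = v ∧ (∀ z', f z' = v → z' = z) ∧
      ∀ b : ℝ,
        ∑ i, w i * (if p i < b ∧ b ≤ m then v - f (p i) else 0) ≤
        ∑ i, w i *
          (if p i < min m z ∧ min m z ≤ m then v - f (p i) else 0) := by
  -- existence of z with f z = v
  obtain ⟨c, hc⟩ := (hftop.eventually_ge_atTop v).exists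
  have hc' : v ≤ f (max 0 c) := hc.trans (hfmono.monotone (le_max_right 0 c))
  obtain ⟨z, _, hz⟩ := intermediate_value_Icc (le_max_left 0 c) (hfcont.continuousOn) ⟨hf0, hc'⟩
  refine ⟨z, hz, fun z' hz' => hfmono.injective (hz'.trans hz.symm), fun b => ?_⟩
  apply Finset.sum_le_sum
  intro i _
  by_cases hi : p i < min m z
  · simp only [hi, true_and, if_pos (min_le_left m z)]
    have hnn : 0 ≤ v - f (p i) := by
      have : f (p i) < f z := hfmono (lt_of_lt_of_le hi (min_le_right m z))
      linarith [hz ▸ this]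
    by_cases hb : p i < b ∧ b ≤ m
    · simp [hb]
    · simp only [hb, if_false, mul_zero]
      exact mul_nonneg (hw i) hnn
  · simp only [hi, false_and, if_false, mul_zero]
    by_cases hb : p i < b ∧ b ≤ m
    · rw [if_pos hb]
      have hzpi : z ≤ p i := by
        rcases le_total m z with h | h
        · exact absurd (lt_of_lt_of_le hb.1 hb.2) (by simpa [min_eq_left h] using hi)
        · simpa [min_eq_right h] using hi
      have : v ≤ f (p i) := hz ▸ (hfmono.monotone hzpi)
      exact mul_nonpos_of_nonneg_of_nonpos (hw i) (by linarith)

    · simp [hb]
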